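/- The class of languages accepted by quasi-deterministic stateless simple (qDNS) sensing 5'→3' WK automata is a proper subset of the class REG of regular languages: every language accepted by a stateless simple sensing 5'→3' WK automaton is regular (indeed of the form (v₁+⋯+v_i)*(u₁+⋯+u_j)* where v₁,…,v_i are the words readable by the first head and u₁,…,u_j those readable by the second head), and the regular language b*ab* + b* is accepted by no quasi-deterministic stateless sensing 5'→3' WK automaton. -/

import Mathlib

/-!
A stateless automaton has a single state, so a computation is a sequence of rewritings
`x ++ w ++ y ↦ w` with `(x, y)` a transition; when it is moreover simple, each step strips a
first-head word on the left or a second-head word on the right, and the accepted words are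
exactly `V∗ * U∗`. Its regularity follows from Myhill–Nerode: finite languages have finitely
many left quotients, and the left quotients of `L * M` and `L∗` are unions of finitely many
languages built from those of `L` and `M`.

For `b*ab* + b*`: if a stateless automaton accepted `a`, the first step that reads something
reads `a` on one side, and applying that transition once more accepts `aa`.
-/

open Computability

/-- The two-letter alphabet `{a, b}`. -/
inductive Letter : Type
  | a : Letter
  | b : Letter
deriving DecidableEq

instance : Fintype Letter :=
  ⟨⟨{Letter.a, Letter.b}, by simp⟩, fun x => by cases x <;> simp⟩

open Letter

/-- A sensing 5'→3' Watson-Crick automaton over the alphabet `T` with state set `Q`: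
an initial state `q0`, a set `F` of final states, and a transition mapping
`δ : Q × T* × T* → 2^Q` that is nonempty for only finitely many triples. -/
structure WKAutomaton (T : Type) (Q : Type) where
  q0 : Q
  F : Set Q
  δ : Q → List T → List T → Set Q
  finite_delta : {t : Q × List T × List T | (δ t.1 t.2.1 t.2.2).Nonempty}.Finite

namespace WKAutomaton

variable {T Q : Type}

/-- One computation step on configurations:
`(q, x ++ w' ++ y) ⇒ (q', w')` iff `q' ∈ δ q x y`. -/
def Step (A : WKAutomaton T Q) (c c' : Q × List T) : Prop :=
  ∃ x y : List T, c.2 = x ++ c'.2 ++ y ∧ c'.1 ∈ A.δ c.1 x y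

/-- The accepted language: words `w` with `(q₀, w) ⇒* (q_F, λ)` for some final `q_F`. -/
def Lang (A : WKAutomaton T Q) : Set (List T) :=
  {w | ∃ qf ∈ A.F, Relation.ReflTransGen A.Step (A.q0, w) (qf, [])}

/-- `A` is deterministic: in every configuration at most one computation step
(choice of `x`, `y`, `w'`, `q'`) is applicable. -/
def Deterministic (A : WKAutomaton T Q) : Prop :=
  ∀ (q : Q) (w x₁ y₁ w₁ x₂ y₂ w₂ : List T) (q₁ q₂ : Q),
    w = x₁ ++ w₁ ++ y₁ → q₁ ∈ A.δ q x₁ y₁ →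
    w = x₂ ++ w₂ ++ y₂ → q₂ ∈ A.δ q x₂ y₂ →
    x₁ = x₂ ∧ y₁ = y₂ ∧ w₁ = w₂ ∧ q₁ = q₂

/-- `A` is quasi-deterministic: for every configuration `(q,w)`, whenever
`(q,w) ⇒ (p,u)` and `(q,w) ⇒ (r,v)`, it holds that `p = r`. -/
def QuasiDet (A : WKAutomaton T Q) : Prop :=
  ∀ (q : Q) (w : List T) (p r : Q) (u v : List T),
    A.Step (q, w) (p, u) → A.Step (q, w) (r, v) → p = r

/-- `A` is state-deterministic: for every state `q` there is at most one state `p`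
with `p ∈ δ(q,u,v)` for some words `u`, `v`. -/
def StateDet (A : WKAutomaton T Q) : Prop :=
  ∀ (q p₁ p₂ : Q) (u₁ v₁ u₂ v₂ : List T),
    p₁ ∈ A.δ q u₁ v₁ → p₂ ∈ A.δ q u₂ v₂ → p₁ = p₂

/-- `A` is stateless: `Q = F = {q₀}`. -/
def Stateless (A : WKAutomaton T Q) : Prop :=
  (∀ q : Q, q = A.q0) ∧ A.F = {A.q0}

/-- `A` is all-final: `Q = F`. -/
def AllFinal (A : WKAutomaton T Q) : Prop := A.F = Set.univ

/-- `A` is simple: at most one head reads in each step. -/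
def Simple (A : WKAutomaton T Q) : Prop :=
  ∀ (q : Q) (u v : List T), (A.δ q u v).Nonempty → u = [] ∨ v = []

/-- `A` is 1-limited: exactly one letter is read in each step. -/
def OneLimited (A : WKAutomaton T Q) : Prop :=
  ∀ (q : Q) (u v : List T), (A.δ q u v).Nonempty →
    (u = [] ∧ v.length = 1) ∨ (u.length = 1 ∧ v = [])

end WKAutomaton

/-- Equality of languages modulo the empty word. -/
def EqModLambda {T : Type} (L₁ L₂ : Set (List T)) : Prop :=
  ∀ w : List T, w ≠ [] → (w ∈ L₁ ↔ w ∈ L₂)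

/-- `L` is accepted (modulo the empty word) by some sensing 5'→3' WK automaton
with a finite state set satisfying the property `P`. -/
def AcceptsWith (T : Type) (P : ∀ Q : Type, WKAutomaton T Q → Prop)
    (L : Set (List T)) : Prop :=
  ∃ (Q : Type) (_ : Finite Q) (A : WKAutomaton T Q), P Q A ∧ EqModLambda A.Lang L

/-- The language `b*ab* + b*`. -/
def Lbabb : Set (List Letter) :=
  {w | (∃ i j : ℕ, w = List.replicate i b ++ a :: List.replicate j b) ∨
       (∃ i : ℕ, w = List.replicate i b)}

namespace Language

variable {α : Type*} {L M : Language α}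

theorem IsRegular.of_finite (hL : (L : Set (List α)).Finite) : L.IsRegular := by
  have hsuffixes : (⋃ w ∈ L, {y | y <:+ w}).Finite :=
    hL.biUnion fun w _ => w.tails.finite_toSet.subset fun y hy => (List.mem_tails y w).2 hy
  refine .of_finite_range_leftQuotient (hsuffixes.finite_subsets.subset ?_)
  rintro _ ⟨x, rfl⟩ y hy
  exact Set.mem_biUnion hy ⟨x, rfl⟩

theorem leftQuotient_mul (x : List α) :
    (L * M).leftQuotient x =
      L.leftQuotient x * M + ⨆ A ∈ M.leftQuotient '' {s | ∃ p ∈ L, p ++ s = x}, A := by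
  ext y
  simp only [mem_leftQuotient, mem_add, mem_mul, mem_iSup, Set.mem_image, Set.mem_ofPred_eq]
  constructor
  · rintro ⟨p, hp, q, hq, hpq⟩
    rcases List.append_eq_append_iff.1 hpq with ⟨s, rfl, rfl⟩ | ⟨r, rfl, rfl⟩
    · exact .inr ⟨_, ⟨s, ⟨p, hp, rfl⟩, rfl⟩, hq⟩
    · exact .inl ⟨r, hp, q, hq, rfl⟩
  · rintro (⟨r, hr, q, hq, rfl⟩ | ⟨_, ⟨s, ⟨p, hp, rfl⟩, rfl⟩, hy⟩)
    · exact ⟨x ++ r, hr, q, hq, List.append_assoc _ _ _⟩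
    · exact ⟨p, hp, s ++ y, hy, (List.append_assoc _ _ _).symm⟩

theorem IsRegular.mul (hL : L.IsRegular) (hM : M.IsRegular) : (L * M).IsRegular := by
  refine .of_finite_range_leftQuotient
    (((hL.finite_range_leftQuotient.prod hM.finite_range_leftQuotient.finite_subsets).image
      fun P : Language α × Set (Language α) => P.1 * M + ⨆ A ∈ P.2, A).subset ?_)
  rintro _ ⟨x, rfl⟩
  exact ⟨(L.leftQuotient x, M.leftQuotient '' {s | ∃ p ∈ L, p ++ s = x}),
    ⟨Set.mem_range_self x, Set.image_subset_range _ _⟩, (leftQuotient_mul x).symm⟩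

theorem exists_of_append_mem_kstar {x y : List α} (h : x ++ y ∈ L∗) (hy : y ≠ []) :
    ∃ p ∈ L∗, ∃ s r, x = p ++ s ∧ s ++ r ∈ L ∧ ∃ z ∈ L∗, y = r ++ z := by
  obtain ⟨ws, hxy, hws⟩ := mem_kstar.1 h
  clear h
  induction ws generalizing x with
  | nil => exact absurd (List.append_eq_nil_iff.1 hxy).2 hy
  | cons w ws ih =>
    rw [List.flatten_cons] at hxy
    have hw : w ∈ L := hws w List.mem_cons_self
    have hws' : ∀ v ∈ ws, v ∈ L := fun v hv => hws v (List.mem_cons_of_mem w hv)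
    rcases List.append_eq_append_iff.1 hxy with ⟨r, rfl, rfl⟩ | ⟨t, rfl, htail⟩
    · exact ⟨[], nil_mem_kstar L, x, r, rfl, hw, _, join_mem_kstar hws', rfl⟩
    · obtain ⟨p, hp, s, r, rfl, hsr, z, hz, rfl⟩ := ih htail.symm hws'
      refine ⟨w ++ p, ?_, s, r, (List.append_assoc _ _ _).symm, hsr, z, hz, rfl⟩
      exact (mul_kstar_le_kstar : L * L∗ ≤ L∗) (append_mem_mul hw hp)

theorem leftQuotient_kstar (x : List α) :
    L∗.leftQuotient x =
      (⨆ _ : x ∈ L∗, 1) + ⨆ A ∈ L.leftQuotient '' {s | ∃ p ∈ L∗, p ++ s = x}, A * L∗ := by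
  ext y
  simp only [mem_leftQuotient, mem_add, mem_iSup, Set.mem_image, Set.mem_ofPred_eq]
  constructor
  · intro h
    by_cases hy : y = []
    · subst hy
      exact .inl ⟨by simpa using h, nil_mem_one⟩
    · obtain ⟨p, hp, s, r, rfl, hsr, z, hz, rfl⟩ := exists_of_append_mem_kstar h hy
      exact .inr ⟨_, ⟨s, ⟨p, hp, rfl⟩, rfl⟩, append_mem_mul hsr hz⟩
  · rintro (⟨hx, hy⟩ | ⟨_, ⟨s, ⟨p, hp, rfl⟩, rfl⟩, hy⟩)
    · obtain rfl := (mem_one y).1 hy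
      simpa using hx
    · obtain ⟨r, hr, z, hz, rfl⟩ := mem_mul.1 hy
      have : p ++ ((s ++ r) ++ z) ∈ L∗ :=
        (kstar_mul_kstar L).le (append_mem_mul hp ((mul_kstar_le_kstar : L * L∗ ≤ L∗)
          (append_mem_mul hr hz)))
      simpa using this

theorem IsRegular.kstar (hL : L.IsRegular) : L∗.IsRegular := by
  refine .of_finite_range_leftQuotient
    (((Set.finite_univ.prod hL.finite_range_leftQuotient.finite_subsets).image
      fun P : Prop × Set (Language α) =>
        (⨆ _ : P.1, (1 : Language α)) + ⨆ A ∈ P.2, A * L∗).subset ?_)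
  rintro _ ⟨x, rfl⟩
  exact ⟨(x ∈ L∗, _), ⟨trivial, Set.image_subset_range _ _⟩, (leftQuotient_kstar x).symm⟩

end Language

open Relation

namespace WKAutomaton

variable {T Q : Type} (A : WKAutomaton T Q)

def firstHeadWords : Language T := {v | A.q0 ∈ A.δ A.q0 v []}

def secondHeadWords : Language T := {u | A.q0 ∈ A.δ A.q0 [] u}

theorem finite_firstHeadWords : (A.firstHeadWords : Set (List T)).Finite :=
  (A.finite_delta.preimage (f := fun v => (A.q0, v, [])) fun _ _ _ _ h => by
    simpa using h).subset fun _ hv => ⟨A.q0, hv⟩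

theorem finite_secondHeadWords : (A.secondHeadWords : Set (List T)).Finite :=
  (A.finite_delta.preimage (f := fun u => (A.q0, [], u)) fun _ _ _ _ h => by
    simpa using h).subset fun _ hu => ⟨A.q0, hu⟩

def LoopStep (w w' : List T) : Prop :=
  ∃ x y, w = x ++ w' ++ y ∧ A.q0 ∈ A.δ A.q0 x y

variable {A}

theorem Stateless.reflTransGen_step_iff (hA : A.Stateless) {q q' : Q} {w w' : List T} :
    ReflTransGen A.Step (q, w) (q', w') ↔ ReflTransGen A.LoopStep w w' := by
  constructor
  · refine fun h => h.lift Prod.snd fun c c' ⟨x, y, hsplit, hδ⟩ => ⟨x, y, hsplit, ?_⟩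
    rwa [hA.1 c.1, hA.1 c'.1] at hδ
  · intro h
    rw [hA.1 q, hA.1 q']
    exact h.lift (fun w => (A.q0, w)) fun _ _ ⟨x, y, hsplit, hδ⟩ => ⟨x, y, hsplit, hδ⟩

theorem Stateless.mem_lang_iff (hA : A.Stateless) {w : List T} :
    w ∈ A.Lang ↔ ReflTransGen A.LoopStep w [] :=
  ⟨fun ⟨_, _, h⟩ => hA.reflTransGen_step_iff.1 h,
    fun h => ⟨A.q0, hA.2 ▸ rfl, hA.reflTransGen_step_iff.2 h⟩⟩

theorem Stateless.append_mem_lang (hA : A.Stateless) {x y w : List T}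
    (hδ : A.q0 ∈ A.δ A.q0 x y) (hw : w ∈ A.Lang) : x ++ w ++ y ∈ A.Lang :=
  hA.mem_lang_iff.2 (.head ⟨x, y, rfl, hδ⟩ (hA.mem_lang_iff.1 hw))

theorem exists_productive_loopStep {w : List T} (h : ReflTransGen A.LoopStep w [])
    (hne : w ≠ []) : ∃ x y w', w = x ++ w' ++ y ∧ x ++ y ≠ [] ∧ A.q0 ∈ A.δ A.q0 x y := by
  induction h using ReflTransGen.head_induction_on with
  | refl => exact absurd rfl hne
  | head hstep _ ih =>
    obtain ⟨x, y, rfl, hδ⟩ := hstep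
    by_cases hxy : x ++ y = []
    · obtain ⟨rfl, rfl⟩ := List.append_eq_nil_iff.1 hxy
      simpa using ih (by simpa using hne)
    · exact ⟨x, y, _, rfl, hxy, hδ⟩

theorem Simple.loopStep_cases (hs : A.Simple) {w w' : List T} (h : A.LoopStep w w') :
    (∃ v ∈ A.firstHeadWords, w = v ++ w') ∨ (∃ u ∈ A.secondHeadWords, w = w' ++ u) := by
  obtain ⟨x, y, rfl, hδ⟩ := h
  rcases hs _ x y ⟨_, hδ⟩ with rfl | rfl
  · exact .inr ⟨y, hδ, rfl⟩
  · exact .inl ⟨x, hδ, by simp⟩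

theorem Stateless.lang_eq_of_simple (hA : A.Stateless) (hs : A.Simple) :
    A.Lang = A.firstHeadWords∗ * A.secondHeadWords∗ := by
  set V := A.firstHeadWords
  set U := A.secondHeadWords
  set S : Language T := {w | ReflTransGen A.LoopStep w []}
  have hS : A.Lang = S := Set.ext fun _ => hA.mem_lang_iff
  have hVS : V * S ≤ S := by
    rintro _ ⟨v, hv, w, hw, rfl⟩
    exact ReflTransGen.head ⟨v, [], by simp, hv⟩ hw
  have hSU : S * U ≤ S := by
    rintro _ ⟨w, hw, u, hu, rfl⟩
    exact ReflTransGen.head ⟨[], u, by simp, hu⟩ hw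
  refine hS.trans (le_antisymm ?_ (kstar_mul_le (kstar_le_of_mul_le_left ?_ hSU) hVS))
  · have hV : V * (V∗ * U∗) ≤ V∗ * U∗ := by
      rw [← mul_assoc]
      gcongr
      exact mul_kstar_le_kstar
    have hU : V∗ * U∗ * U ≤ V∗ * U∗ := by
      rw [mul_assoc]
      gcongr
      exact kstar_mul_le_kstar
    intro w hw
    induction hw using ReflTransGen.head_induction_on with
    | refl => exact Language.append_mem_mul (Language.nil_mem_kstar V) (Language.nil_mem_kstar U)
    | head hstep _ ih =>
      rcases hs.loopStep_cases hstep with ⟨v, hv, rfl⟩ | ⟨u, hu, rfl⟩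
      · exact hV (Language.append_mem_mul hv ih)
      · exact hU (Language.append_mem_mul ih hu)
  · rintro _ rfl
    exact ReflTransGen.refl

end WKAutomaton

theorem eq_replicate_b_of_a_notMem {w : List Letter} (h : a ∉ w) :
    w = List.replicate w.length b :=
  List.eq_replicate_iff.2 ⟨rfl, fun c hc => by cases c; exacts [absurd hc h, rfl]⟩

theorem mem_Lbabb_iff {w : List Letter} : w ∈ Lbabb ↔ w.count a ≤ 1 := by
  constructor
  · rintro (⟨i, j, rfl⟩ | ⟨i, rfl⟩) <;> simp [List.count_replicate]
  · intro h
    by_cases ha : a ∈ w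
    · obtain ⟨s, t, rfl⟩ := List.append_of_mem ha
      have hst : s.count a + t.count a = 0 := by simp at h; omega
      refine .inl ⟨s.length, t.length, ?_⟩
      rw [← eq_replicate_b_of_a_notMem (List.count_eq_zero.1 (by omega : s.count a = 0)),
        ← eq_replicate_b_of_a_notMem (List.count_eq_zero.1 (by omega : t.count a = 0))]
    · exact .inr ⟨w.length, eq_replicate_b_of_a_notMem ha⟩

theorem isRegular_Lbabb : Language.IsRegular (Lbabb : Language Letter) := by
  refine .of_finite_range_leftQuotient ((Set.finite_range
    fun k : Fin 3 => ({y | k + y.count a ≤ 1} : Language Letter)).subset ?_)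
  rintro _ ⟨x, rfl⟩
  refine ⟨⟨min (x.count a) 2, by omega⟩, ?_⟩
  ext y
  show min (x.count a) 2 + y.count a ≤ 1 ↔ x ++ y ∈ Lbabb
  rw [mem_Lbabb_iff, List.count_append]
  omega

theorem WKAutomaton.Stateless.not_eqModLambda_Lbabb {Q : Type} {A : WKAutomaton Letter Q}
    (hA : A.Stateless) : ¬ EqModLambda A.Lang Lbabb := by
  intro hL
  have ha : [a] ∈ A.Lang := (hL [a] (List.cons_ne_nil _ _)).2 (.inl ⟨0, 0, rfl⟩)
  obtain ⟨x, y, w, hsplit, hxy, hδ⟩ :=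
    WKAutomaton.exists_productive_loopStep (hA.mem_lang_iff.1 ha) (List.cons_ne_nil _ _)
  have hxy_a : x ++ y = [a] := by
    have hlen := congrArg List.length hsplit
    have hxy_pos := List.length_pos_iff.2 hxy
    simp only [List.length_append, List.length_singleton] at hlen hxy_pos
    rw [List.length_eq_zero_iff.1 (by omega : w.length = 0), List.append_nil] at hsplit
    exact hsplit.symm
  have haa := (hL _ (by simp)).1 (hA.append_mem_lang hδ ha)
  have hcount := congrArg (List.count a) hxy_a
  simp [mem_Lbabb_iff] at haa hcount
  omega

/-- The class of languages accepted by quasi-deterministic stateless simple (qDNS)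
sensing 5'→3' WK automata is a proper subset of the class REG of regular
languages: the language accepted by a stateless simple sensing 5'→3' WK
automaton is of the form `V∗ * U∗` where `V` is the set of words readable by
the first head and `U` the set of words readable by the second head, and is
regular; on the other hand, the regular language `b*ab* + b*` is accepted by
no quasi-deterministic stateless sensing 5'→3' WK automaton. -/
theorem qDNS_proper_subset_REG :
    (∀ (T : Type) (Q : Type), Finite Q → ∀ A : WKAutomaton T Q,
      A.Stateless → A.Simple →
      let V : Language T := {v : List T | A.q0 ∈ A.δ A.q0 v []}
      let U : Language T := {u : List T | A.q0 ∈ A.δ A.q0 [] u}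
      A.Lang = (V∗ * U∗ : Language T) ∧
      Language.IsRegular (A.Lang : Language T)) ∧
    Language.IsRegular (Lbabb : Language Letter) ∧
    ¬ AcceptsWith Letter (fun _ A => A.QuasiDet ∧ A.Stateless) Lbabb := by
  refine ⟨fun T Q _ A hA hs => ?_, isRegular_Lbabb, ?_⟩
  · have hlang := hA.lang_eq_of_simple hs
    refine ⟨hlang, hlang ▸ ?_⟩
    exact (Language.IsRegular.of_finite A.finite_firstHeadWords).kstar.mul
      (Language.IsRegular.of_finite A.finite_secondHeadWords).kstar
  · rintro ⟨Q, _, A, ⟨-, hA⟩, hL⟩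
    exact hA.not_eqModLambda_Lbabb hL
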